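/- Let x : ℝ → ℝ² be a smooth curve with u = x' nonvanishing satisfying Eᵢ = 0, where Eᵢ = ε_{ij}üʲ/‖u‖³ − 3(u̇·u)ε_{ij}u̇ʲ/‖u‖⁵ + m(‖u‖²u̇ᵢ − (u̇·u)uᵢ)/‖u‖³. Then the Frenet curvature k = ε_{ij}uⁱu̇ʲ/‖u‖³ is constant along the curve. -/

import Mathlib

/-- Standard inner product on ℝ². -/
def dot (a b : ℝ × ℝ) : ℝ := a.1 * b.1 + a.2 * b.2

/-- Euclidean norm on ℝ². -/
noncomputable def nrm (a : ℝ × ℝ) : ℝ := Real.sqrt (a.1 ^ 2 + a.2 ^ 2)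

/-- Eᵢ = ε_{ij}üʲ/‖u‖³ − 3(u̇·u)ε_{ij}u̇ʲ/‖u‖⁵ + m(‖u‖²u̇ᵢ − (u̇·u)uᵢ)/‖u‖³,
with ε₁₂ = 1, ε₂₁ = −1. -/
noncomputable def Evec (m : ℝ) (u ud udd : ℝ × ℝ) : ℝ × ℝ :=
  (udd.2 / (nrm u) ^ 3 - 3 * dot ud u * ud.2 / (nrm u) ^ 5
      + m * ((nrm u) ^ 2 * ud.1 - dot ud u * u.1) / (nrm u) ^ 3,
   - udd.1 / (nrm u) ^ 3 + 3 * dot ud u * ud.1 / (nrm u) ^ 5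
      + m * ((nrm u) ^ 2 * ud.2 - dot ud u * u.2) / (nrm u) ^ 3)

/-- Frenet curvature k = ε_{ij}uⁱu̇ʲ/‖u‖³. -/
noncomputable def curv (u v : ℝ × ℝ) : ℝ := (u.1 * v.2 - u.2 * v.1) / (nrm u) ^ 3

theorem stmt_11 (m : ℝ) (x : ℝ → ℝ × ℝ) (hx : ContDiff ℝ (⊤ : ℕ∞) x)
    (hu : ∀ t, deriv x t ≠ 0)
    (hE : ∀ t, Evec m (deriv x t) (deriv (deriv x) t) (deriv (deriv (deriv x)) t) = 0) :
    ∀ s t, curv (deriv x s) (deriv (deriv x) s)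
      = curv (deriv x t) (deriv (deriv x) t) := by
  set u := deriv x with hu_def
  set v := deriv u with hv_def
  set w := deriv v with hw_def
  have hx' : ContDiff ℝ (⊤ : ℕ∞) x := hx.of_le (by simp)
  have hcu : ContDiff ℝ (⊤ : ℕ∞) u := (contDiff_infty_iff_deriv.mp hx').2
  have hcv : ContDiff ℝ (⊤ : ℕ∞) v := (contDiff_infty_iff_deriv.mp hcu).2
  have hdu : Differentiable ℝ u := (contDiff_infty_iff_deriv.mp hcu).1
  have hdv : Differentiable ℝ v := (contDiff_infty_iff_deriv.mp hcv).1
  -- the curvature function has zero derivative everywhere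
  have key : ∀ t, HasDerivAt (fun s => curv (u s) (v s)) 0 t := by
    intro t
    have hU : HasDerivAt u (v t) t := (hdu t).hasDerivAt
    have hV : HasDerivAt v (w t) t := (hdv t).hasDerivAt
    have hu1 : HasDerivAt (fun s => (u s).1) (v t).1 t :=
      (ContinuousLinearMap.fst ℝ ℝ ℝ).hasFDerivAt.comp_hasDerivAt t hU
    have hu2 : HasDerivAt (fun s => (u s).2) (v t).2 t :=
      (ContinuousLinearMap.snd ℝ ℝ ℝ).hasFDerivAt.comp_hasDerivAt t hU
    have hv1 : HasDerivAt (fun s => (v s).1) (w t).1 t :=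
      (ContinuousLinearMap.fst ℝ ℝ ℝ).hasFDerivAt.comp_hasDerivAt t hV
    have hv2 : HasDerivAt (fun s => (v s).2) (w t).2 t :=
      (ContinuousLinearMap.snd ℝ ℝ ℝ).hasFDerivAt.comp_hasDerivAt t hV
    have hQpos : 0 < (u t).1 ^ 2 + (u t).2 ^ 2 := by
      have ha : u t ≠ 0 := hu t
      by_contra hle
      push_neg at hle
      have h1 : (u t).1 = 0 ∧ (u t).2 = 0 := by
        constructor <;> nlinarith [sq_nonneg (u t).1, sq_nonneg (u t).2]
      exact ha (Prod.ext h1.1 h1.2)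
    have hQne : (u t).1 ^ 2 + (u t).2 ^ 2 ≠ 0 := ne_of_gt hQpos
    have hsq : Real.sqrt ((u t).1 ^ 2 + (u t).2 ^ 2) ^ 2 = (u t).1 ^ 2 + (u t).2 ^ 2 :=
      Real.sq_sqrt hQpos.le
    have hsne : Real.sqrt ((u t).1 ^ 2 + (u t).2 ^ 2) ≠ 0 :=
      ne_of_gt (Real.sqrt_pos.mpr hQpos)
    have hN : HasDerivAt (fun s => (u s).1 * (v s).2 - (u s).2 * (v s).1)
        ((u t).1 * (w t).2 - (u t).2 * (w t).1) t := by
      have := (hu1.mul hv2).sub (hu2.mul hv1)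
      refine this.congr_deriv ?_
      ring
    have hQ : HasDerivAt (fun s => ((u s).1 ^ 2 + (u s).2 ^ 2))
        (2 * ((u t).1 * (v t).1 + (u t).2 * (v t).2)) t := by
      have := ((hu1.pow 2).add (hu2.pow 2))
      refine this.congr_deriv ?_
      ring
    have hs3 : HasDerivAt (fun s => Real.sqrt ((u s).1 ^ 2 + (u s).2 ^ 2) ^ 3)
        (3 * Real.sqrt ((u t).1 ^ 2 + (u t).2 ^ 2) ^ 2
          * (2 * ((u t).1 * (v t).1 + (u t).2 * (v t).2)
              / (2 * Real.sqrt ((u t).1 ^ 2 + (u t).2 ^ 2)))) t :=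
      (hQ.sqrt hQne).pow 3
    have hs3ne : Real.sqrt ((u t).1 ^ 2 + (u t).2 ^ 2) ^ 3 ≠ 0 := pow_ne_zero _ hsne
    have hk := hN.div hs3 hs3ne
    have hfun : (fun s => curv (u s) (v s)) =
        fun s => ((u s).1 * (v s).2 - (u s).2 * (v s).1)
          / Real.sqrt ((u s).1 ^ 2 + (u s).2 ^ 2) ^ 3 := by
      funext s; simp [curv, nrm]
    rw [hfun]
    refine hk.congr_deriv ?_
    have hEt := hE t
    rw [Evec, Prod.mk.injEq] at hEt
    obtain ⟨h1, h2⟩ := hEt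
    simp only [dot, nrm] at h1 h2
    set s := Real.sqrt ((u t).1 ^ 2 + (u t).2 ^ 2) with hs_def
    simp only [Prod.fst_zero, Prod.snd_zero] at h1 h2
    field_simp at h1 h2 ⊢
    have hs4 : s ^ 4 ≠ 0 := pow_ne_zero _ hsne
    have h0 : ((u t).1 * (w t).2 - (u t).2 * (w t).1) * s ^ 3 * (2 * s) * s ^ 4
        - ((u t).1 * (v t).2 - (u t).2 * (v t).1)
          * (3 * s ^ 2 * (2 * ((u t).1 * (v t).1 + (u t).2 * (v t).2))) * s ^ 4 = 0 := by
      linear_combination 2 * s ^ 6 * ((u t).1 * h1 + (u t).2 * h2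
        - s ^ 2 * m * ((v t).1 * (u t).1 + (v t).2 * (u t).2) * hsq)
    have h0' : (((u t).1 * (w t).2 - (u t).2 * (w t).1) * s ^ 3 * (2 * s)
        - ((u t).1 * (v t).2 - (u t).2 * (v t).1)
          * (3 * s ^ 2 * (2 * ((u t).1 * (v t).1 + (u t).2 * (v t).2)))) * s ^ 4 = 0 := by
      linear_combination h0
    rcases mul_eq_zero.mp h0' with h | h
    · exact mul_left_cancel₀ (pow_ne_zero 2 hsne) (by linear_combination h / 2)
    · exact absurd h hs4
  have hdiff : Differentiable ℝ (fun s => curv (u s) (v s)) :=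
    fun t => (key t).differentiableAt
  have hzero : ∀ t, deriv (fun s => curv (u s) (v s)) t = 0 :=
    fun t => (key t).deriv
  exact fun s t => is_const_of_deriv_eq_zero hdiff hzero s t
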